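/- Let n be a positive integer and let k be an integer with C(k,2) ≤ n ≤ C(k+1,2), where C(a,b) denotes the binomial coefficient. Then the maximum of raj(w) − inv(w) over all permutations w of {1,…,n} equals C(n+1,2) − k·n + C(k+1,3). Moreover, this maximum is attained exactly at the layered permutations e_{(α_1,…,α_k)} for sequences (α_1,…,α_k) with j−1 ≤ α_j ≤ j for all 1 ≤ j ≤ k and Σ_{j=1}^k α_j = n (where the value α_1 = 0 is permitted, the corresponding layered permutation being the one with block sizes α_2,…,α_k). -/

import Mathlib

open scoped Classical

noncomputable section

namespace RajRegularity

variable {n : ℕ}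

/-- Maximal length of an increasing subsequence of `w(i), …, w(n)` beginning with `w(i)`:
the largest cardinality of a set `s` of positions that contains `i`, consists of positions
`≥ i`, and on which `w` is strictly increasing. -/
def lisFrom (w : Equiv.Perm (Fin n)) (i : Fin n) : ℕ :=
  (Finset.univ.filter fun s : Finset (Fin n) =>
      i ∈ s ∧ (∀ j ∈ s, i ≤ j) ∧ ∀ j ∈ s, ∀ k ∈ s, j < k → w j < w k).sup Finset.card

/-- `rajCode w i = (n − i + 1) −` (maximal length of an increasing subsequence of
`w(i), …, w(n)` beginning with `w(i)`); here positions are 0-based, so the number of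
positions `≥ i` is `n - i`. -/
def rajCode (w : Equiv.Perm (Fin n)) (i : Fin n) : ℕ :=
  (n - (i : ℕ)) - lisFrom w i

/-- The Rajchgot index `raj w = Σᵢ rajCode w i`. -/
def raj (w : Equiv.Perm (Fin n)) : ℕ := ∑ i, rajCode w i

/-- The number of inversions of `w`: pairs of positions `i < j` with `w i > w j`. -/
def invNum (w : Equiv.Perm (Fin n)) : ℕ :=
  (Finset.univ.filter fun p : Fin n × Fin n => p.1 < p.2 ∧ w p.2 < w p.1).card

/-- The `i`-th entry of the inv code: `ℓ_i(w) = #{ j : i < j, w j < w i }`. -/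
def ellCode (w : Equiv.Perm (Fin n)) (i : Fin n) : ℕ :=
  (Finset.univ.filter fun j : Fin n => i < j ∧ w j < w i).card

/-- The set of descent positions of `w` (0-based position `j` with `w j > w (j+1)`). -/
def descents (w : Equiv.Perm (Fin n)) : Finset (Fin n) :=
  Finset.univ.filter fun j : Fin n =>
    if h : (j : ℕ) + 1 < n then w ⟨(j : ℕ) + 1, h⟩ < w j else False

/-- The major index: the sum of the (1-based) descent positions of `w`. -/
def maj (w : Equiv.Perm (Fin n)) : ℕ := ∑ j ∈ descents w, ((j : ℕ) + 1)

/-- `mCode w i`: the number of descents of `w` at positions `≥ i`. -/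
def mCode (w : Equiv.Perm (Fin n)) (i : Fin n) : ℕ :=
  ((descents w).filter fun j => i ≤ j).card

/-- `w` is dominant iff it avoids the pattern 132. -/
def Dominant (w : Equiv.Perm (Fin n)) : Prop :=
  ¬ ∃ i j k : Fin n, i < j ∧ j < k ∧ w i < w k ∧ w k < w j

/-- `w` is fireworks iff there are no positions `i < j` with `w j < w (j+1) < w i`. -/
def Fireworks (w : Equiv.Perm (Fin n)) : Prop :=
  ¬ ∃ (i j : Fin n) (h : (j : ℕ) + 1 < n),
      i < j ∧ w j < w ⟨(j : ℕ) + 1, h⟩ ∧ w ⟨(j : ℕ) + 1, h⟩ < w i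

/-- `w` is inverse fireworks iff `w⁻¹` is fireworks. -/
def InvFireworks (w : Equiv.Perm (Fin n)) : Prop := Fireworks w⁻¹

/-- `w` is a valley permutation: for some `a`, it is strictly decreasing on positions `≤ a`
and strictly increasing on positions `≥ a`. -/
def Valley (w : Equiv.Perm (Fin n)) : Prop :=
  ∃ a : ℕ, (∀ i j : Fin n, i < j → (j : ℕ) ≤ a → w j < w i) ∧
    ∀ i j : Fin n, a ≤ (i : ℕ) → i < j → w i < w j

/-- `eps w i` is the (1-based) blob index `ε_i(w) = i + r_i(w)`. -/
def eps (w : Equiv.Perm (Fin n)) (i : Fin n) : ℕ := (i : ℕ) + 1 + rajCode w i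

/-- The shape of `w`: `α_k(w) = #{ i : ε_i(w) = k }` (here `k : Fin n` stands for the
1-based index `k + 1`). -/
def shape (w : Equiv.Perm (Fin n)) : Fin n → ℕ := fun k =>
  (Finset.univ.filter fun i : Fin n => eps w i = (k : ℕ) + 1).card

/-- Dominance order on shapes: `α ⪰ β` iff every tail sum of `α` is at least the
corresponding tail sum of `β`. -/
def Dominates (α β : Fin n → ℕ) : Prop :=
  ∀ m : Fin n,
    ∑ k ∈ Finset.univ.filter (fun k : Fin n => m ≤ k), β k ≤
      ∑ k ∈ Finset.univ.filter (fun k : Fin n => m ≤ k), α k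

/-- Right weak order: `u ≤_R w` iff `w = u * v` length-additively. -/
def leR (u w : Equiv.Perm (Fin n)) : Prop :=
  ∃ v : Equiv.Perm (Fin n), w = u * v ∧ invNum w = invNum u + invNum v

/-- Left weak order: `u ≤_L w` iff `w = v * u` length-additively. -/
def leL (u w : Equiv.Perm (Fin n)) : Prop :=
  ∃ v : Equiv.Perm (Fin n), w = v * u ∧ invNum w = invNum v + invNum u

/-- Two-sided weak order: the transitive closure of the union of left and right weak
orders (both are reflexive, so we may use the reflexive-transitive closure). -/
def leLR (u w : Equiv.Perm (Fin n)) : Prop :=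
  Relation.ReflTransGen (fun a b : Equiv.Perm (Fin n) => leL a b ∨ leR a b) u w

/-- The maximum of the block of the set partition `π(w)` containing the value `v`;
the block of `v` is `{ v' : ε_{w⁻¹ v'}(w) = ε_{w⁻¹ v}(w) }`. -/
def blockMax (w : Equiv.Perm (Fin n)) (v : Fin n) : ℕ :=
  ((Finset.univ.filter fun v' : Fin n => eps w (w⁻¹ v') = eps w (w⁻¹ v)).max'
      ⟨v, Finset.mem_filter.mpr ⟨Finset.mem_univ v, rfl⟩⟩).val

/-- The fireworks map `Φ`: the one-line word of `Φ w` lists the blocks of `π(w)` in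
increasing order of their maxima, each block written in decreasing order.  Equivalently,
`Φ w` sorts the values by the key (max of block, value reversed), lexicographically. -/
def Phi (w : Equiv.Perm (Fin n)) : Equiv.Perm (Fin n) :=
  Tuple.sort fun v : Fin n => n * blockMax w v + (n - 1 - (v : ℕ))

/-- The inverse fireworks map `Φ_inv w = Φ(w⁻¹)⁻¹`. -/
def PhiInv (w : Equiv.Perm (Fin n)) : Equiv.Perm (Fin n) := (Phi w⁻¹)⁻¹

/-- Partial sums of a sequence of block sizes. -/
def psum (a : ℕ → ℕ) (m : ℕ) : ℕ := ∑ j ∈ Finset.range m, a j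

/-- The index of the block (interval `[psum a m, psum a (m+1))`) containing the value `v`. -/
def blockIdx (n : ℕ) (a : ℕ → ℕ) (v : Fin n) : ℕ :=
  ((Finset.range n).filter fun m => psum a (m + 1) ≤ (v : ℕ)).card

/-- The layered permutation with block sizes `a 0, a 1, …`: it reverses each of the
consecutive intervals `[psum a m, psum a (m+1))` of `{0, …, n-1}`.  Equivalently, its
one-line word sorts the values by (block index, value reversed) lexicographically. -/
def layered (n : ℕ) (a : ℕ → ℕ) : Equiv.Perm (Fin n) :=
  Tuple.sort fun v : Fin n => n * blockIdx n a v + (n - 1 - (v : ℕ))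

/-- The layered permutation `e_α` associated to a shape `α : Fin n → ℕ`. -/
def eOf (α : Fin n → ℕ) : Equiv.Perm (Fin n) :=
  layered n fun m => if h : m < n then α ⟨m, h⟩ else 0

/-!
Let the level of position `i` be `L i = lisFrom w i` and let `c t` count the positions of level
`t + 1`. Then `raj w = C(n+1,2) - ∑ L i = C(n+1,2) - ∑ (t+1) c t`, and positions of equal level
form a decreasing subsequence, so `inv w ≥ ∑ C(c t, 2)`. Since `∑ c t = n` and
`∑ C(k-t, 2) = C(k+1, 3)`, the bound minus `raj w - inv w` is the number of inversions between
different levels plus a sum of terms `g t ≥ 0` that vanish iff `c t ∈ {k - t - 1, k - t}`; for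
`t < k`, `2 g t = (c t - (k - t)) (c t - (k - t) + 1)`. Hence equality holds iff inversions only
occur within a level and all `c t` are of that size. Such a permutation is the layered
permutation whose block `j` consists of the positions of level `k - j`; conversely, in a layered
permutation with block sizes `j ≤ a j ≤ j + 1`, the level of a position in block `j` is `k - j`.
-/

open Finset

section Levels

variable {w : Equiv.Perm (Fin n)}

-- reducible, so that the decidability instance of the filter in `lisFrom` is found for it
abbrev IsIncreasingFrom (w : Equiv.Perm (Fin n)) (i : Fin n) (s : Finset (Fin n)) : Prop :=
  i ∈ s ∧ (∀ j ∈ s, i ≤ j) ∧ ∀ j ∈ s, ∀ k ∈ s, j < k → w j < w k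

lemma card_le_lisFrom {i : Fin n} {s : Finset (Fin n)} (hs : IsIncreasingFrom w i s) :
    #s ≤ lisFrom w i :=
  le_sup (f := card) (mem_filter.mpr ⟨mem_univ s, hs⟩)

lemma exists_isIncreasingFrom_card_eq (w : Equiv.Perm (Fin n)) (i : Fin n) :
    ∃ s, IsIncreasingFrom w i s ∧ #s = lisFrom w i := by
  have hne : (univ.filter (IsIncreasingFrom w i)).Nonempty := ⟨{i}, by simp [IsIncreasingFrom]⟩
  obtain ⟨s, hs, hcard⟩ := exists_mem_eq_sup _ hne card
  exact ⟨s, (mem_filter.mp hs).2, hcard.symm⟩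

lemma one_le_lisFrom (w : Equiv.Perm (Fin n)) (i : Fin n) : 1 ≤ lisFrom w i :=
  card_le_lisFrom (s := {i}) (by simp [IsIncreasingFrom])

lemma lisFrom_le_sub (w : Equiv.Perm (Fin n)) (i : Fin n) : lisFrom w i ≤ n - i := by
  obtain ⟨s, hs, hcard⟩ := exists_isIncreasingFrom_card_eq w i
  rw [← hcard, ← Fin.card_Ici]
  exact card_le_card fun j hj => mem_Ici.mpr (hs.2.1 j hj)

lemma lisFrom_lt_lisFrom {i j : Fin n} (hij : i < j) (hw : w i < w j) :
    lisFrom w j < lisFrom w i := by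
  obtain ⟨s, ⟨hjs, hjle, hinc⟩, hcard⟩ := exists_isIncreasingFrom_card_eq w j
  have his : i ∉ s := fun h => (hjle i h).not_gt hij
  have hgt : ∀ x ∈ s, i < x ∧ w i < w x := fun x hx =>
    ⟨hij.trans_le (hjle x hx),
      (hjle x hx).eq_or_lt.elim (fun h => h ▸ hw) fun h => hw.trans (hinc j hjs x hx h)⟩
  have hins : IsIncreasingFrom w i (insert i s) := by
    refine ⟨mem_insert_self i s, fun x hx => ?_, fun x hx y hy hxy => ?_⟩
    · rcases mem_insert.mp hx with hxi | hx
      exacts [hxi.ge, (hgt x hx).1.le]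
    · rcases mem_insert.mp hx with hxi | hx <;> rcases mem_insert.mp hy with hyi | hy
      · exact absurd (hxi.trans hyi.symm) hxy.ne
      · exact hxi ▸ (hgt y hy).2
      · exact absurd (hyi ▸ hxy) (hgt x hx).1.not_gt
      · exact hinc x hx y hy hxy
  calc lisFrom w j = #s := hcard.symm
    _ < #(insert i s) := by rw [card_insert_of_notMem his]; omega
    _ ≤ lisFrom w i := card_le_lisFrom hins

lemma lt_of_lisFrom_eq {i j : Fin n} (hij : i < j) (h : lisFrom w i = lisFrom w j) :
    w j < w i :=
  (lt_or_gt_of_ne (w.injective.ne hij.ne)).resolve_left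
    fun hw => (lisFrom_lt_lisFrom hij hw).ne h.symm

lemma sum_sub_val_eq_choose_two (n : ℕ) : ∑ i : Fin n, (n - (i : ℕ)) = (n + 1).choose 2 := by
  rw [Fin.sum_univ_eq_sum_range (fun i => n - i), ← sum_range_reflect, Nat.choose_two_right,
    ← sum_range_id, sum_range_succ']
  exact sum_congr rfl fun i hi => by have := mem_range.mp hi; omega

lemma raj_eq_choose_sub_sum_lisFrom (w : Equiv.Perm (Fin n)) :
    (raj w : ℤ) = (n + 1).choose 2 - ∑ i, (lisFrom w i : ℤ) := by
  rw [← sum_sub_val_eq_choose_two, raj, Nat.cast_sum, Nat.cast_sum, ← sum_sub_distrib]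
  refine sum_congr rfl fun i _ => ?_
  rw [rajCode, Nat.cast_sub (lisFrom_le_sub w i)]

end Levels

section LevelCounts

variable {w : Equiv.Perm (Fin n)}

def levelCount (w : Equiv.Perm (Fin n)) (t : ℕ) : ℕ := #{i | lisFrom w i = t + 1}

lemma lisFrom_sub_one_mem_range {N : ℕ} (hN : n ≤ N) (i : Fin n) :
    lisFrom w i - 1 ∈ range N := by
  have := lisFrom_le_sub w i
  have := one_le_lisFrom w i
  rw [mem_range]
  omega

lemma sum_comp_lisFrom {M : Type*} [AddCommMonoid M] {N : ℕ} (hN : n ≤ N) (f : ℕ → M) :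
    ∑ i, f (lisFrom w i) = ∑ t ∈ range N, levelCount w t • f (t + 1) := by
  rw [← sum_fiberwise_of_maps_to fun i _ => lisFrom_sub_one_mem_range (w := w) hN i]
  refine sum_congr rfl fun t _ => ?_
  have hfiber : univ.filter (fun i => lisFrom w i - 1 = t) = univ.filter (lisFrom w · = t + 1) :=
    filter_congr fun i _ => by have := one_le_lisFrom w i; omega
  rw [hfiber, levelCount, ← sum_const]
  exact sum_congr rfl fun i hi => by rw [(mem_filter.mp hi).2]

lemma sum_levelCount {N : ℕ} (hN : n ≤ N) : ∑ t ∈ range N, levelCount w t = n := by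
  simpa using (sum_comp_lisFrom (w := w) hN fun _ => (1 : ℕ)).symm

def sameLevelPairs (w : Equiv.Perm (Fin n)) : Finset (Fin n × Fin n) :=
  {p | p.1 < p.2 ∧ lisFrom w p.1 = lisFrom w p.2}

lemma card_sameLevelPairs {N : ℕ} (hN : n ≤ N) :
    #(sameLevelPairs w) = ∑ t ∈ range N, (levelCount w t).choose 2 := by
  rw [card_eq_sum_card_fiberwise (s := sameLevelPairs w)
    fun p _ => lisFrom_sub_one_mem_range (w := w) hN p.1]
  refine sum_congr rfl fun t _ => ?_
  rw [levelCount, ← card_product_filter_lt]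
  congr 1
  ext p
  simp only [sameLevelPairs, mem_filter, mem_product, mem_univ, true_and]
  have := one_le_lisFrom w p.1
  omega

lemma sameLevelPairs_subset :
    sameLevelPairs w ⊆ univ.filter fun p : Fin n × Fin n => p.1 < p.2 ∧ w p.2 < w p.1 := by
  intro p hp
  obtain ⟨hlt, heq⟩ := (mem_filter.mp hp).2
  exact mem_filter.mpr ⟨mem_univ p, hlt, lt_of_lisFrom_eq hlt heq⟩

lemma card_sameLevelPairs_le_invNum : #(sameLevelPairs w) ≤ invNum w :=
  card_le_card sameLevelPairs_subset

def InversionsWithinLevels (w : Equiv.Perm (Fin n)) : Prop :=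
  ∀ ⦃i j : Fin n⦄, i < j → w j < w i → lisFrom w i = lisFrom w j

lemma card_sameLevelPairs_eq_invNum_iff :
    #(sameLevelPairs w) = invNum w ↔ InversionsWithinLevels w := by
  refine ⟨fun h i j hij hw => ?_, fun h => congr_arg card ?_⟩
  · have hmem : (i, j) ∈ sameLevelPairs w := by
      rw [eq_of_subset_of_card_le sameLevelPairs_subset h.ge]
      exact mem_filter.mpr ⟨mem_univ _, hij, hw⟩
    exact (mem_filter.mp hmem).2.2
  · refine eq_of_subset_of_card_le sameLevelPairs_subset (card_le_card fun p hp => ?_)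
    obtain ⟨hlt, hw⟩ := (mem_filter.mp hp).2
    exact mem_filter.mpr ⟨mem_univ p, hlt, h hlt hw⟩

end LevelCounts

section Arithmetic

lemma two_mul_cast_choose_two (c : ℕ) : 2 * (c.choose 2 : ℤ) = c * (c - 1) := by
  have h := Nat.cast_choose_two ℚ c
  have : ((2 * (c.choose 2 : ℤ) : ℤ) : ℚ) = ((c * (c - 1) : ℤ) : ℚ) := by
    push_cast
    rw [h]
    ring
  exact_mod_cast this

def levelGap (k t c : ℕ) : ℤ :=
  (c.choose 2 : ℤ) + ((t : ℤ) + 1) * c + ((k - t).choose 2 : ℤ) - (k : ℤ) * c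

lemma two_mul_levelGap (k t c : ℕ) :
    2 * levelGap k t c = ((c : ℤ) - (k - t : ℕ)) * ((c : ℤ) - (k - t : ℕ) + 1)
      + 2 * ((t : ℤ) + (k - t : ℕ) - k) * c := by
  rw [levelGap]
  linear_combination two_mul_cast_choose_two c + two_mul_cast_choose_two (k - t)

lemma mul_add_one_nonneg (x : ℤ) : 0 ≤ x * (x + 1) := by
  rcases le_or_gt 0 x with hx | hx <;> nlinarith

lemma levelGap_nonneg (k t c : ℕ) : 0 ≤ levelGap k t c := by
  have h := two_mul_levelGap k t c
  have hx := mul_add_one_nonneg ((c : ℤ) - (k - t : ℕ))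
  have he : 0 ≤ ((t : ℤ) + (k - t : ℕ) - k) * c := mul_nonneg (by omega) c.cast_nonneg
  linarith

lemma levelGap_eq_zero_iff {k t c : ℕ} :
    levelGap k t c = 0 ↔ k - t - 1 ≤ c ∧ c ≤ k - t := by
  have h := two_mul_levelGap k t c
  have hx := mul_add_one_nonneg ((c : ℤ) - (k - t : ℕ))
  have he : 0 ≤ ((t : ℤ) + (k - t : ℕ) - k) * c := mul_nonneg (by omega) c.cast_nonneg
  constructor
  · intro h0
    have hx0 : ((c : ℤ) - (k - t : ℕ)) * ((c : ℤ) - (k - t : ℕ) + 1) = 0 := by linarith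
    rcases mul_eq_zero.mp hx0 with h' | h' <;> omega
  · rintro ⟨h1, h2⟩
    rcases le_or_gt k t with hkt | hkt
    · obtain rfl : c = 0 := by omega
      simp [levelGap, Nat.sub_eq_zero_of_le hkt]
    · have hx0 : ((c : ℤ) - (k - t : ℕ)) * ((c : ℤ) - (k - t : ℕ) + 1) = 0 :=
        mul_eq_zero.mpr (by omega)
      have he0 : ((t : ℤ) + (k - t : ℕ) - k) = 0 := by omega
      rw [hx0, he0] at h
      linarith

lemma sum_range_choose_two_sub {N k : ℕ} (hk : k ≤ N + 1) :
    ∑ t ∈ range N, (k - t).choose 2 = (k + 1).choose 3 := by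
  induction N generalizing k with
  | zero => rw [sum_range_zero, Nat.choose_eq_zero_of_lt (by omega)]
  | succ N ih =>
    rcases k with _ | k
    · simp [Nat.choose_eq_zero_of_lt]
    · rw [sum_range_succ', Nat.choose_succ_succ (k + 1) 2]
      simp only [Nat.add_sub_add_right, Nat.sub_zero, ih (by omega : k ≤ N + 1)]
      ring

lemma mul_add_lt_mul_add_iff {n b b' r r' : ℕ} (hr : r < n) (hr' : r' < n) :
    n * b + r < n * b' + r' ↔ b < b' ∨ b = b' ∧ r < r' := by
  rcases lt_trichotomy b b' with h | rfl | h
  · have : n * (b + 1) ≤ n * b' := Nat.mul_le_mul_left n h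
    simp only [h, true_or, iff_true]
    linarith
  · simp
  · have : n * (b' + 1) ≤ n * b := Nat.mul_le_mul_left n h
    simp only [h.not_gt, h.ne', false_and, or_self, iff_false, not_lt]
    linarith

end Arithmetic

section Bound

variable (w : Equiv.Perm (Fin n)) (k : ℕ)

-- `range (n + k)` contains every `t` with `levelCount w t ≠ 0` or `(k - t).choose 2 ≠ 0`
lemma bound_sub_raj_sub_invNum_eq :
    ((n + 1).choose 2 : ℤ) - (k : ℤ) * (n : ℤ) + ((k + 1).choose 3 : ℤ)
        - ((raj w : ℤ) - (invNum w : ℤ)) =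
      ((invNum w : ℤ) - #(sameLevelPairs w))
        + ∑ t ∈ range (n + k), levelGap k t (levelCount w t) := by
  have hN : n ≤ n + k := Nat.le_add_right n k
  have hL :
      ∑ i, (lisFrom w i : ℤ) = ∑ t ∈ range (n + k), ((t : ℤ) + 1) * levelCount w t := by
    rw [sum_comp_lisFrom hN]
    exact sum_congr rfl fun t _ => by push_cast; ring
  have hc : ∑ t ∈ range (n + k), (levelCount w t : ℤ) = n := by
    exact_mod_cast sum_levelCount hN
  have hS :
      (#(sameLevelPairs w) : ℤ) = ∑ t ∈ range (n + k), ((levelCount w t).choose 2 : ℤ) := by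
    exact_mod_cast card_sameLevelPairs hN
  have hk : ∑ t ∈ range (n + k), ((k - t).choose 2 : ℤ) = (k + 1).choose 3 := by
    exact_mod_cast sum_range_choose_two_sub (by omega)
  simp only [levelGap, sum_add_distrib, sum_sub_distrib, ← mul_sum]
  rw [raj_eq_choose_sub_sum_lisFrom, hL, hc, hS, hk]
  ring

theorem raj_sub_invNum_le :
    (raj w : ℤ) - (invNum w : ℤ) ≤
      ((n + 1).choose 2 : ℤ) - (k : ℤ) * (n : ℤ) + ((k + 1).choose 3 : ℤ) := by
  have h := bound_sub_raj_sub_invNum_eq w k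
  have hinv : (#(sameLevelPairs w) : ℤ) ≤ invNum w := by
    exact_mod_cast card_sameLevelPairs_le_invNum
  have hgap := sum_nonneg fun t (_ : t ∈ range (n + k)) => levelGap_nonneg k t (levelCount w t)
  linarith

theorem raj_sub_invNum_eq_iff :
    (raj w : ℤ) - (invNum w : ℤ) =
        ((n + 1).choose 2 : ℤ) - (k : ℤ) * (n : ℤ) + ((k + 1).choose 3 : ℤ) ↔
      InversionsWithinLevels w ∧
        ∀ t < n + k, k - t - 1 ≤ levelCount w t ∧ levelCount w t ≤ k - t := by
  have h := bound_sub_raj_sub_invNum_eq w k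
  have hinv : (#(sameLevelPairs w) : ℤ) ≤ invNum w := by
    exact_mod_cast card_sameLevelPairs_le_invNum
  have hgap : ∀ t ∈ range (n + k), 0 ≤ levelGap k t (levelCount w t) :=
    fun t _ => levelGap_nonneg k t (levelCount w t)
  rw [eq_comm, ← sub_eq_zero, h,
    add_eq_zero_iff_of_nonneg (sub_nonneg.mpr hinv) (sum_nonneg hgap),
    sub_eq_zero, eq_comm, Nat.cast_inj, card_sameLevelPairs_eq_invNum_iff,
    sum_eq_zero_iff_of_nonneg hgap]
  simp only [mem_range, levelGap_eq_zero_iff]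

end Bound

section Layered

variable {a : ℕ → ℕ} {k : ℕ}

lemma psum_mono (a : ℕ → ℕ) : Monotone (psum a) :=
  fun _ _ h => sum_le_sum_of_subset (range_subset_range.mpr h)

lemma psum_succ (a : ℕ → ℕ) (m : ℕ) : psum a (m + 1) = psum a m + a m := sum_range_succ a m

lemma le_psum_add_one {j : ℕ} (hbd : ∀ i < j, i ≤ a i) : j ≤ psum a j + 1 := by
  cases j with
  | zero => omega
  | succ m =>
    have := single_le_sum (f := a) (fun _ _ => Nat.zero_le _) (self_mem_range_succ m)
    have := hbd m m.lt_succ_self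
    rw [psum]
    omega

lemma blockIdx_eq_of_psum_le_of_lt {v : Fin n} {j : ℕ} (hj : j ≤ n) (h₁ : psum a j ≤ v)
    (h₂ : v < psum a (j + 1)) : blockIdx n a v = j := by
  rw [blockIdx, ← card_range j]
  congr 1
  ext m
  simp only [mem_filter, mem_range]
  constructor
  · rintro ⟨-, hm⟩
    by_contra! hjm
    exact (h₂.trans_le (psum_mono a (by omega))).not_ge hm
  · exact fun hm => ⟨by omega, (psum_mono a hm).trans h₁⟩

lemma blockIdx_mono (n : ℕ) (a : ℕ → ℕ) : Monotone (blockIdx n a) := fun v v' h =>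
  card_le_card fun m hm => by
    simp only [mem_filter] at hm ⊢
    exact ⟨hm.1, hm.2.trans h⟩

section BlockSizes

variable (hbd : ∀ j < k, j ≤ a j) (hsum : psum a k = n)
include hbd hsum

lemma blockIdx_spec (v : Fin n) :
    blockIdx n a v < k ∧ psum a (blockIdx n a v) ≤ v ∧ v < psum a (blockIdx n a v + 1) := by
  have hv : v < psum a k := hsum ▸ v.isLt
  have hk : k ≠ 0 := by rintro rfl; simp [psum] at hv
  have hex : ∃ j, (v : ℕ) < psum a (j + 1) :=
    ⟨k - 1, by rwa [Nat.sub_add_cancel (by omega)]⟩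
  have hjk : Nat.find hex < k := by
    have := Nat.find_le (h := hex) (n := k - 1) (by rwa [Nat.sub_add_cancel (by omega)])
    omega
  have hlow : psum a (Nat.find hex) ≤ v := by
    rcases h : Nat.find hex with _ | m
    · simp [psum]
    · exact not_lt.mp (Nat.find_min hex (by omega : m < Nat.find hex))
  have hj : Nat.find hex ≤ n := by
    have := le_psum_add_one fun i hi => hbd i (hi.trans hjk)
    omega
  rw [blockIdx_eq_of_psum_le_of_lt hj hlow (Nat.find_spec hex)]
  exact ⟨hjk, hlow, Nat.find_spec hex⟩

lemma blockIdx_eq_iff (v : Fin n) {j : ℕ} (hj : j < k) :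
    blockIdx n a v = j ↔ psum a j ≤ v ∧ v < psum a (j + 1) := by
  refine ⟨fun h => h ▸ (blockIdx_spec hbd hsum v).2, fun ⟨h₁, h₂⟩ => ?_⟩
  have := le_psum_add_one fun i hi => hbd i (hi.trans hj)
  exact blockIdx_eq_of_psum_le_of_lt (by omega) h₁ h₂

lemma card_blockIdx_eq {j : ℕ} (hj : j < k) : #{v : Fin n | blockIdx n a v = j} = a j := by
  have hle : psum a (j + 1) ≤ n := hsum ▸ psum_mono a hj
  have himage : ({v : Fin n | blockIdx n a v = j} : Finset (Fin n)).map Fin.valEmbedding =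
      Ico (psum a j) (psum a (j + 1)) := by
    ext x
    simp only [mem_map, mem_filter, mem_univ, true_and, Fin.valEmbedding_apply, mem_Ico,
      blockIdx_eq_iff hbd hsum _ hj]
    exact ⟨fun ⟨v, hv, hvx⟩ => hvx ▸ hv, fun hx => ⟨⟨x, by omega⟩, hx, rfl⟩⟩
  rw [← card_map, himage, Nat.card_Ico, psum_succ, add_tsub_cancel_left]

end BlockSizes

def layeredKey (n : ℕ) (a : ℕ → ℕ) (v : Fin n) : ℕ := n * blockIdx n a v + (n - 1 - v)

lemma layeredKey_injective (n : ℕ) (a : ℕ → ℕ) : Function.Injective (layeredKey n a) := by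
  intro v v' h
  have hmod := congr_arg (· % n) h
  simp only [layeredKey, Nat.mul_add_mod] at hmod
  rw [Nat.mod_eq_of_lt (by omega), Nat.mod_eq_of_lt (by omega)] at hmod
  exact Fin.ext (by omega)

lemma layeredKey_lt_layeredKey_iff {v v' : Fin n} :
    layeredKey n a v < layeredKey n a v' ↔
      blockIdx n a v < blockIdx n a v' ∨ blockIdx n a v = blockIdx n a v' ∧ v' < v := by
  rw [layeredKey, layeredKey, mul_add_lt_mul_add_iff (by omega) (by omega), Fin.lt_def]
  omega

lemma eq_layered_iff {σ : Equiv.Perm (Fin n)} :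
    σ = layered n a ↔ ∀ ⦃p q : Fin n⦄, p < q →
      blockIdx n a (σ p) < blockIdx n a (σ q) ∨
        blockIdx n a (σ p) = blockIdx n a (σ q) ∧ σ q < σ p := by
  have hinj := (layeredKey_injective n a).comp σ.injective
  change σ = Tuple.sort (layeredKey n a) ↔ _
  rw [Tuple.eq_sort_iff]
  refine ⟨fun ⟨hmono, _⟩ p q hpq => ?_, fun h => ?_⟩
  · exact layeredKey_lt_layeredKey_iff.mp (hmono.strictMono_of_injective hinj hpq)
  · have hsm : StrictMono (layeredKey n a ∘ σ) := fun p q hpq =>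
      layeredKey_lt_layeredKey_iff.mpr (h hpq)
    exact ⟨hsm.monotone, fun p q hpq heq => absurd heq (hsm hpq).ne⟩

end Layered

section LayeredLevels

variable {a : ℕ → ℕ} {k : ℕ}

lemma blockIdx_layered_mono (n : ℕ) (a : ℕ → ℕ) :
    Monotone fun p => blockIdx n a (layered n a p) := fun p q hpq => by
  rcases hpq.eq_or_lt with rfl | hpq
  · exact le_rfl
  · rcases eq_layered_iff.mp rfl hpq with h | h
    exacts [h.le, h.1.le]

lemma layered_lt_of_blockIdx_eq {p q : Fin n} (hpq : p < q)
    (h : blockIdx n a (layered n a p) = blockIdx n a (layered n a q)) :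
    layered n a q < layered n a p :=
  ((eq_layered_iff.mp rfl hpq).resolve_left h.not_lt).2

variable (hbd : ∀ j < k, j ≤ a j) (hsum : psum a k = n)
include hbd hsum

lemma lisFrom_layered_le (p : Fin n) :
    lisFrom (layered n a) p ≤ k - blockIdx n a (layered n a p) := by
  set σ := layered n a
  obtain ⟨s, ⟨-, hps, hinc⟩, hcard⟩ := exists_isIncreasingFrom_card_eq σ p
  have hinj : Set.InjOn (fun x => blockIdx n a (σ x)) s := fun x hx y hy hxy => by
    by_contra hne
    rcases lt_or_gt_of_ne hne with h | h
    · exact (layered_lt_of_blockIdx_eq h hxy).not_gt (hinc x hx y hy h)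
    · exact (layered_lt_of_blockIdx_eq h hxy.symm).not_gt (hinc y hy x hx h)
  have hmaps : Set.MapsTo (fun x => blockIdx n a (σ x)) s (Ico (blockIdx n a (σ p)) k) :=
    fun x hx => mem_Ico.mpr
      ⟨blockIdx_layered_mono n a (hps x hx), (blockIdx_spec hbd hsum (σ x)).1⟩
  rw [← hcard, ← Nat.card_Ico]
  exact card_le_card_of_injOn _ hmaps hinj

lemma le_lisFrom_layered :
    ∀ m (p : Fin n), blockIdx n a (layered n a p) + m < k →
      m + 1 ≤ lisFrom (layered n a) p := by
  set σ := layered n a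
  intro m
  induction m with
  | zero => exact fun p _ => one_le_lisFrom σ p
  | succ m ih =>
    intro p hp
    set B := blockIdx n a (σ p)
    have hB1 := hbd (B + 1) (by omega)
    have hv : psum a (B + 1) < n := by
      have := hsum ▸ psum_mono a (show B + 1 + 1 ≤ k by omega)
      rw [psum_succ] at this
      omega
    -- the smallest value of block `B + 1` extends increasing subsequences starting in block `B`
    set q := σ.symm ⟨psum a (B + 1), hv⟩
    have hσq : σ q = ⟨psum a (B + 1), hv⟩ := σ.apply_symm_apply _
    have hBq : blockIdx n a (σ q) = B + 1 := by
      rw [hσq, blockIdx_eq_iff hbd hsum _ (by omega), psum_succ _ (B + 1)]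
      exact ⟨le_rfl, by simp only; omega⟩
    have hpq : p < q := by
      by_contra! hqp
      have : blockIdx n a (σ q) ≤ B := blockIdx_layered_mono n a hqp
      omega
    have hσpq : σ p < σ q := by
      rw [hσq, Fin.lt_def]
      exact (blockIdx_spec hbd hsum (σ p)).2.2
    have := lisFrom_lt_lisFrom hpq hσpq
    have := ih q (by omega)
    omega

lemma lisFrom_layered (p : Fin n) :
    lisFrom (layered n a) p = k - blockIdx n a (layered n a p) := by
  have := (blockIdx_spec hbd hsum (layered n a p)).1
  refine (lisFrom_layered_le hbd hsum p).antisymm ?_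
  have := le_lisFrom_layered hbd hsum (k - blockIdx n a (layered n a p) - 1) p (by omega)
  omega

lemma inversionsWithinLevels_layered : InversionsWithinLevels (layered n a) := by
  intro p q hpq hσ
  have h : blockIdx n a (layered n a p) = blockIdx n a (layered n a q) :=
    (blockIdx_layered_mono n a hpq.le).antisymm (blockIdx_mono n a hσ.le)
  rw [lisFrom_layered hbd hsum, lisFrom_layered hbd hsum, h]

lemma levelCount_layered (t : ℕ) :
    levelCount (layered n a) t = if t < k then a (k - 1 - t) else 0 := by
  have hσ : levelCount (layered n a) t = #{v : Fin n | k - blockIdx n a v = t + 1} :=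
    card_equiv (layered n a) fun p => by simp [lisFrom_layered hbd hsum]
  rw [hσ]
  split_ifs with ht
  · rw [← card_blockIdx_eq hbd hsum (show k - 1 - t < k by omega)]
    congr 1
    exact filter_congr fun v _ => by have := (blockIdx_spec hbd hsum v).1; omega
  · exact card_eq_zero.mpr (filter_eq_empty_iff.mpr fun v _ => by omega)

end LayeredLevels

section ExtremalIsLayered

variable {w : Equiv.Perm (Fin n)} {k : ℕ}

lemma InversionsWithinLevels.lt_of_lisFrom_lt (hw : InversionsWithinLevels w) {i j : Fin n}
    (h : lisFrom w i < lisFrom w j) : w j < w i := by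
  have hij : i ≠ j := fun e => h.ne (congr_arg _ e)
  by_contra! hle
  have hlt := hle.lt_of_ne (w.injective.ne hij)
  rcases lt_or_gt_of_ne hij with hij | hji
  · exact (lisFrom_lt_lisFrom hij hlt).not_gt h
  · exact h.ne (hw hji hlt).symm

lemma InversionsWithinLevels.antitone_lisFrom (hw : InversionsWithinLevels w) :
    Antitone (lisFrom w) := fun p q hpq => by
  by_contra! h
  exact h.ne (hw (hpq.lt_of_ne (by rintro rfl; exact h.false)) (hw.lt_of_lisFrom_lt h))

lemma InversionsWithinLevels.card_lisFrom_gt_le (hw : InversionsWithinLevels w) (i : Fin n) :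
    #{j | lisFrom w i < lisFrom w j} ≤ w i := by
  rw [← Fin.card_Iio]
  exact card_le_card_of_injOn w
    (fun j hj => mem_Iio.mpr (hw.lt_of_lisFrom_lt (mem_filter.mp hj).2)) w.injective.injOn

lemma InversionsWithinLevels.lt_card_lisFrom_ge (hw : InversionsWithinLevels w) (i : Fin n) :
    (w i : ℕ) < #{j | lisFrom w i ≤ lisFrom w j} := by
  rw [Nat.lt_iff_add_one_le, ← Fin.card_Iic]
  refine card_le_card_of_injOn w.symm (fun v hv => mem_filter.mpr ⟨mem_univ _, ?_⟩)
    w.symm.injective.injOn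
  by_contra! h
  have := hw.lt_of_lisFrom_lt h
  rw [Equiv.apply_symm_apply] at this
  exact (mem_Iic.mp hv).not_gt this

lemma lisFrom_le_of_levelCount_le (hcount : ∀ t < n + k, levelCount w t ≤ k - t) (i : Fin n) :
    lisFrom w i ≤ k := by
  have h1 := one_le_lisFrom w i
  have h2 := lisFrom_le_sub w i
  have hpos : 0 < levelCount w (lisFrom w i - 1) :=
    card_pos.mpr ⟨i, mem_filter.mpr ⟨mem_univ i, by omega⟩⟩
  have := hcount (lisFrom w i - 1) (by omega)
  omega

-- block `j` will consist of the positions of level `k - j`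
def blockSizes (w : Equiv.Perm (Fin n)) (k : ℕ) (j : ℕ) : ℕ :=
  if j < k then levelCount w (k - 1 - j) else 0

lemma blockSizes_bounds
    (hcount : ∀ t < n + k, k - t - 1 ≤ levelCount w t ∧ levelCount w t ≤ k - t)
    {j : ℕ} (hj : j < k) : j ≤ blockSizes w k j ∧ blockSizes w k j ≤ j + 1 := by
  rw [blockSizes, if_pos hj]
  have := hcount (k - 1 - j) (by omega)
  omega

lemma psum_blockSizes (hL : ∀ i, lisFrom w i ≤ k) :
    ∀ m ≤ k, psum (blockSizes w k) m = #{i | k - m < lisFrom w i} := by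
  intro m
  induction m with
  | zero =>
    intro _
    rw [psum, sum_range_zero, Nat.sub_zero]
    exact (card_eq_zero.mpr (filter_eq_empty_iff.mpr fun i _ => (hL i).not_gt)).symm
  | succ m ih =>
    intro hm
    have hsplit : univ.filter (fun i => k - (m + 1) < lisFrom w i) =
        univ.filter (fun i => k - m < lisFrom w i) ∪
          univ.filter (fun i => lisFrom w i = k - 1 - m + 1) := by
      ext i
      simp only [mem_union, mem_filter, mem_univ, true_and]
      omega
    rw [hsplit, card_union_of_disjoint (disjoint_filter.mpr fun i _ _ => by omega),
      ← ih (by omega), psum_succ, blockSizes, if_pos (by omega), levelCount]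

lemma blockIdx_blockSizes (hw : InversionsWithinLevels w)
    (hcount : ∀ t < n + k, k - t - 1 ≤ levelCount w t ∧ levelCount w t ≤ k - t)
    (i : Fin n) :
    blockIdx n (blockSizes w k) (w i) = k - lisFrom w i := by
  have hL := lisFrom_le_of_levelCount_le fun t ht => (hcount t ht).2
  have h1 := one_le_lisFrom w i
  have hLi := hL i
  have hlow : psum (blockSizes w k) (k - lisFrom w i) ≤ w i := by
    rw [psum_blockSizes hL (k - lisFrom w i) (by omega), Nat.sub_sub_self hLi]
    exact hw.card_lisFrom_gt_le i
  have hup : (w i : ℕ) < psum (blockSizes w k) (k - lisFrom w i + 1) := by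
    rw [psum_blockSizes hL (k - lisFrom w i + 1) (by omega)]
    convert hw.lt_card_lisFrom_ge i using 4
    omega
  have hj : k - lisFrom w i ≤ psum (blockSizes w k) (k - lisFrom w i) + 1 :=
    le_psum_add_one fun j _ => (blockSizes_bounds hcount (by omega)).1
  exact blockIdx_eq_of_psum_le_of_lt (by omega) hlow hup

lemma eq_layered_blockSizes (hw : InversionsWithinLevels w)
    (hcount : ∀ t < n + k, k - t - 1 ≤ levelCount w t ∧ levelCount w t ≤ k - t) :
    w = layered n (blockSizes w k) := by
  refine eq_layered_iff.mpr fun p q hpq => ?_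
  rw [blockIdx_blockSizes hw hcount, blockIdx_blockSizes hw hcount]
  have hLp := lisFrom_le_of_levelCount_le (fun t ht => (hcount t ht).2) p
  rcases (hw.antitone_lisFrom hpq.le).lt_or_eq with h | h
  · exact Or.inl (by omega)
  · exact Or.inr ⟨by rw [h], lt_of_lisFrom_eq hpq h.symm⟩

lemma sum_blockSizes (hcount : ∀ t < n + k, levelCount w t ≤ k - t) :
    ∑ j ∈ range k, blockSizes w k j = n := by
  have hL := lisFrom_le_of_levelCount_le hcount
  rw [← psum, psum_blockSizes hL k le_rfl, Nat.sub_self]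
  exact (filter_true_of_mem fun i _ => one_le_lisFrom w i).symm ▸ card_fin n

end ExtremalIsLayered

theorem max_raj_sub_inv_general (n k : ℕ) :
    (∀ w : Equiv.Perm (Fin n),
        (raj w : ℤ) - (invNum w : ℤ) ≤
          ((n + 1).choose 2 : ℤ) - (k : ℤ) * (n : ℤ) + ((k + 1).choose 3 : ℤ)) ∧
    (∀ w : Equiv.Perm (Fin n),
        ((raj w : ℤ) - (invNum w : ℤ) =
            ((n + 1).choose 2 : ℤ) - (k : ℤ) * (n : ℤ) + ((k + 1).choose 3 : ℤ)) ↔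
          ∃ a : ℕ → ℕ,
            (∀ j : ℕ, j < k → j ≤ a j ∧ a j ≤ j + 1) ∧
            (∀ j : ℕ, k ≤ j → a j = 0) ∧
            (∑ j ∈ Finset.range k, a j) = n ∧
            w = layered n a) := by
  refine ⟨fun w => raj_sub_invNum_le w k, fun w => ?_⟩
  rw [raj_sub_invNum_eq_iff]
  constructor
  · rintro ⟨hw, hcount⟩
    exact ⟨blockSizes w k, fun j => blockSizes_bounds hcount, fun j hj => if_neg (by omega),
      sum_blockSizes fun t ht => (hcount t ht).2, eq_layered_blockSizes hw hcount⟩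
  · rintro ⟨a, hbd, -, hsum, rfl⟩
    have hbd' : ∀ j < k, j ≤ a j := fun j hj => (hbd j hj).1
    refine ⟨inversionsWithinLevels_layered hbd' hsum, fun t _ => ?_⟩
    rw [levelCount_layered hbd' hsum]
    split_ifs with ht
    · have := hbd (k - 1 - t) (by omega)
      omega
    · omega

/-- for `C(k,2) ≤ n ≤ C(k+1,2)`, the maximum of `raj(w) − inv(w)` over
`w ∈ S_n` is `C(n+1,2) − k·n + C(k+1,3)`, attained exactly at the layered permutations
with block sizes `(a 0, …, a (k-1))` satisfying `j ≤ a j ≤ j + 1` (0-based; i.e.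
`j − 1 ≤ α_j ≤ j` 1-based, the first size being allowed to equal `0`) and `Σ a j = n`. -/
theorem max_raj_sub_inv (n k : ℕ) (hn : 0 < n)
    (hk1 : Nat.choose k 2 ≤ n) (hk2 : n ≤ Nat.choose (k + 1) 2) :
    (∀ w : Equiv.Perm (Fin n),
        (raj w : ℤ) - (invNum w : ℤ) ≤
          ((n + 1).choose 2 : ℤ) - (k : ℤ) * (n : ℤ) + ((k + 1).choose 3 : ℤ)) ∧
    (∀ w : Equiv.Perm (Fin n),
        ((raj w : ℤ) - (invNum w : ℤ) =
            ((n + 1).choose 2 : ℤ) - (k : ℤ) * (n : ℤ) + ((k + 1).choose 3 : ℤ)) ↔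
          ∃ a : ℕ → ℕ,
            (∀ j : ℕ, j < k → j ≤ a j ∧ a j ≤ j + 1) ∧
            (∀ j : ℕ, k ≤ j → a j = 0) ∧
            (∑ j ∈ Finset.range k, a j) = n ∧
            w = layered n a) :=
  max_raj_sub_inv_general n k

end RajRegularity
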